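/- arXiv:1604.07595 — 2 statements merged into one kernel-verified Lean document; each statement's English description precedes it below -/
import Mathlib

section
/- For the trilinear form S₃(x,y,z) = (z₁+z₂)(x₁y₁+x₁y₂+x₂y₁−x₂y₂) + (z₁−z₂)(x₃y₁+x₃y₂+x₄y₁−x₄y₂), one has ∑_{j₂,j₃} (∑_{j₁} |S₃(e_{j₁},e_{j₂},e_{j₃})|)² = 64, hence (∑_{j₂,j₃}(∑_{j₁}|S₃(e_{j₁},e_{j₂},e_{j₃})|)²)^{1/2} / ‖S₃‖ = 2 = (√2)². -/
set_option maxSynthPendingDepth 3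

/-- Standard basis vector of `ℓ∞ⁿ`. -/
noncomputable def stdBasis (n : ℕ) (i : Fin n) : PiLp ⊤ (fun _ : Fin n => ℝ) :=
  (WithLp.equiv ⊤ (∀ _ : Fin n, ℝ)).symm (Pi.single i 1)

/-!
Writing `y± = y₁ ± y₂`, the form is `S₃(x,y,z) = (z₁+z₂)(x₁y₊ + x₂y₋) + (z₁−z₂)(x₃y₊ + x₄y₋)`.
Since `|a+b| + |a−b| = 2 max(|a|,|b|)`, each bracket is at most `‖x‖∞ · 2‖y‖∞` and the whole
form at most `4 ‖x‖∞ ‖y‖∞ ‖z‖∞`, with equality at `x = (1,1,1,1)`, `y = z = e₁`; so `‖S₃‖ = 4`.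
Every coefficient `S₃(e_i, e_j, e_k)` is `±1`, so the mixed sum is `4 · 4² = 64`, whose square
root is `8 = 2 ‖S₃‖`.
-/

section Abs

variable {α : Type*} [Field α] [LinearOrder α] [IsStrictOrderedRing α] {a b c : α}

lemma abs_add_add_abs_sub_le (ha : |a| ≤ c) (hb : |b| ≤ c) : |a + b| + |a - b| ≤ 2 * c := by
  rw [abs_le] at ha hb
  rcases abs_cases (a + b) with ⟨h₁, _⟩ | ⟨h₁, _⟩ <;>
    rcases abs_cases (a - b) with ⟨h₂, _⟩ | ⟨h₂, _⟩ <;> linarith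

lemma abs_mul_add_mul_le (ha : |a| ≤ c) (hb : |b| ≤ c) (u v : α) :
    |a * u + b * v| ≤ c * (|u| + |v|) :=
  calc |a * u + b * v| ≤ |a| * |u| + |b| * |v| := by
        simpa only [abs_mul] using abs_add_le (a * u) (b * v)
    _ ≤ c * |u| + c * |v| := by gcongr
    _ = c * (|u| + |v|) := by ring

end Abs

namespace ContinuousLinearMap

variable {𝕜 E F G H : Type*} [NontriviallyNormedField 𝕜]
  [SeminormedAddCommGroup E] [NormedSpace 𝕜 E] [SeminormedAddCommGroup F] [NormedSpace 𝕜 F]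
  [SeminormedAddCommGroup G] [NormedSpace 𝕜 G] [SeminormedAddCommGroup H] [NormedSpace 𝕜 H]

theorem opNorm_le_bound₃ (f : E →L[𝕜] F →L[𝕜] G →L[𝕜] H) {C : ℝ} (h0 : 0 ≤ C)
    (hC : ∀ x y z, ‖f x y z‖ ≤ C * ‖x‖ * ‖y‖ * ‖z‖) : ‖f‖ ≤ C :=
  f.opNorm_le_bound h0 fun x => (f x).opNorm_le_bound₂ (by positivity) (hC x)

theorem le_opNorm₃ (f : E →L[𝕜] F →L[𝕜] G →L[𝕜] H) (x : E) (y : F) (z : G) :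
    ‖f x y z‖ ≤ ‖f‖ * ‖x‖ * ‖y‖ * ‖z‖ :=
  (f x y).le_of_opNorm_le (f.le_opNorm₂ x y) z

end ContinuousLinearMap

lemma abs_apply_le_norm {n : ℕ} (x : PiLp ⊤ fun _ : Fin n => ℝ) (i : Fin n) : |x i| ≤ ‖x‖ :=
  PiLp.norm_apply_le x i

lemma norm_stdBasis (n : ℕ) (i : Fin n) : ‖stdBasis n i‖ = 1 :=
  (PiLp.norm_single ⊤ (fun _ : Fin n => ℝ) i 1).trans norm_one

section Bound

variable (x : PiLp ⊤ fun _ : Fin 4 => ℝ) (y z : PiLp ⊤ fun _ : Fin 2 => ℝ)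

lemma abs_S₃_le :
    |(z 0 + z 1) * (x 0 * y 0 + x 0 * y 1 + x 1 * y 0 - x 1 * y 1)
      + (z 0 - z 1) * (x 2 * y 0 + x 2 * y 1 + x 3 * y 0 - x 3 * y 1)|
      ≤ 4 * ‖x‖ * ‖y‖ * ‖z‖ := by
  have hx := abs_apply_le_norm x
  have hy := abs_add_add_abs_sub_le (abs_apply_le_norm y 0) (abs_apply_le_norm y 1)
  have hz := abs_add_add_abs_sub_le (abs_apply_le_norm z 0) (abs_apply_le_norm z 1)
  set u := y 0 + y 1
  set v := y 0 - y 1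
  calc _ = |(x 0 * u + x 1 * v) * (z 0 + z 1) + (x 2 * u + x 3 * v) * (z 0 - z 1)| := by
        congr 1; ring
    _ ≤ ‖x‖ * (|u| + |v|) * (|z 0 + z 1| + |z 0 - z 1|) :=
        abs_mul_add_mul_le (abs_mul_add_mul_le (hx 0) (hx 1) u v)
          (abs_mul_add_mul_le (hx 2) (hx 3) u v) _ _
    _ ≤ ‖x‖ * (2 * ‖y‖) * (2 * ‖z‖) := by gcongr
    _ = 4 * ‖x‖ * ‖y‖ * ‖z‖ := by ring

end Bound

section TrilinearForm

variable (S : (PiLp ⊤ fun _ : Fin 4 => ℝ) →L[ℝ] (PiLp ⊤ fun _ : Fin 2 => ℝ) →L[ℝ]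
    (PiLp ⊤ fun _ : Fin 2 => ℝ) →L[ℝ] ℝ)
  (hS : ∀ (x : PiLp ⊤ fun _ : Fin 4 => ℝ) (y z : PiLp ⊤ fun _ : Fin 2 => ℝ),
    S x y z = (z 0 + z 1) * (x 0 * y 0 + x 0 * y 1 + x 1 * y 0 - x 1 * y 1)
      + (z 0 - z 1) * (x 2 * y 0 + x 2 * y 1 + x 3 * y 0 - x 3 * y 1))
include hS

lemma norm_S₃_eq_four : ‖S‖ = 4 := by
  refine le_antisymm (S.opNorm_le_bound₃ (by norm_num) fun x y z => ?_) ?_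
  · rw [Real.norm_eq_abs, hS]
    exact abs_S₃_le x y z
  · let ones : PiLp ⊤ fun _ : Fin 4 => ℝ := WithLp.toLp ⊤ fun _ => 1
    have h_ones : ‖ones‖ = 1 := by simp [ones]
    have h_val : S ones (stdBasis 2 0) (stdBasis 2 0) = 4 := by
      rw [hS]; norm_num [ones, stdBasis]
    simpa [h_val, h_ones, norm_stdBasis] using S.le_opNorm₃ ones (stdBasis 2 0) (stdBasis 2 0)

lemma abs_S₃_stdBasis (i : Fin 4) (j k : Fin 2) :
    |S (stdBasis 4 i) (stdBasis 2 j) (stdBasis 2 k)| = 1 := by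
  rw [hS]
  fin_cases i <;> fin_cases j <;> fin_cases k <;> norm_num [stdBasis, Pi.single_apply, Fin.ext_iff]

end TrilinearForm

/-- For the trilinear form
`S₃(x,y,z) = (z₁+z₂)(x₁y₁+x₁y₂+x₂y₁−x₂y₂) + (z₁−z₂)(x₃y₁+x₃y₂+x₄y₁−x₄y₂)`,
one has `∑_{j₂,j₃} (∑_{j₁} |S₃(e_{j₁},e_{j₂},e_{j₃})|)² = 64`, hence
`(∑_{j₂,j₃}(∑_{j₁}|S₃(e_{j₁},e_{j₂},e_{j₃})|)²)^{1/2} / ‖S₃‖ = 2`. -/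
theorem stmt6
    (S : (PiLp ⊤ fun _ : Fin 4 => ℝ) →L[ℝ] (PiLp ⊤ fun _ : Fin 2 => ℝ) →L[ℝ]
      (PiLp ⊤ fun _ : Fin 2 => ℝ) →L[ℝ] ℝ)
    (hS : ∀ (x : PiLp ⊤ fun _ : Fin 4 => ℝ) (y z : PiLp ⊤ fun _ : Fin 2 => ℝ),
      S x y z = (z 0 + z 1) * (x 0 * y 0 + x 0 * y 1 + x 1 * y 0 - x 1 * y 1)
        + (z 0 - z 1) * (x 2 * y 0 + x 2 * y 1 + x 3 * y 0 - x 3 * y 1)) :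
    (∑ j₂ : Fin 2, ∑ j₃ : Fin 2,
        (∑ j₁ : Fin 4, |S (stdBasis 4 j₁) (stdBasis 2 j₂) (stdBasis 2 j₃)|) ^ 2) = 64
      ∧ (∑ j₂ : Fin 2, ∑ j₃ : Fin 2,
          (∑ j₁ : Fin 4,
            |S (stdBasis 4 j₁) (stdBasis 2 j₂) (stdBasis 2 j₃)|) ^ 2) ^ ((1 : ℝ) / 2) / ‖S‖
        = 2 := by
  have h_sum : (∑ j₂ : Fin 2, ∑ j₃ : Fin 2,
      (∑ j₁ : Fin 4, |S (stdBasis 4 j₁) (stdBasis 2 j₂) (stdBasis 2 j₃)|) ^ 2) = 64 := by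
    simp only [abs_S₃_stdBasis S hS]
    norm_num
  refine ⟨h_sum, ?_⟩
  rw [h_sum, norm_S₃_eq_four S hS, ← Real.sqrt_eq_rpow, show (64 : ℝ) = 8 ^ 2 by norm_num,
    Real.sqrt_sq (by norm_num)]
  norm_num
end

section
/- For every m-linear form U : (ℝⁿ)^m → ℝ with sup norms, (∑_{j₁}(∑_{j₂,…,j_m} |U(e_{j₁},…,e_{j_m})|²)^{1/2}) ≤ (√2)^{m−1} ‖U‖; i.e., the mixed (ℓ₁,ℓ₂)-Littlewood inequality with exponent (1,2,…,2) holds with constant (√2)^{m−1}. -/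
/-!
For fixed `j₁`, `U (e_{j₁}, ·)` is an `m`-linear form, and the multilinear Khinchin inequality with
constant `√2` per variable bounds `(∑_{j₂,…} |U (e_{j₁}, e_{j₂}, …)|²)^{1/2}` by `√2 ^ m` times the
average of `|U (e_{j₁}, x₂, …, x_{m+1})|` over independent random sign vectors `xₖ = ∑ⱼ ±eⱼ`. Sign
vectors have sup norm `1`, so after exchanging the sum over `j₁` with the average it remains to see
that `∑_{j₁} |φ (e_{j₁})| ≤ ‖φ‖` for a functional `φ` on `ℓ∞ⁿ`: evaluate `φ` at the sign vector
matching the signs of the `φ (e_{j₁})`.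

The multilinear Khinchin inequality follows from the scalar one variable by variable, Minkowski's
inequality in `ℓ₂` pulling the average out of the remaining square sum. The scalar inequality
`∑ aᵢ² ≤ 2 (𝔼 |∑ εᵢ aᵢ|)²` (Szarek) is proved following Latała and Oleszkiewicz: `S = ∑ εᵢ aᵢ`
satisfies `Δ S = -2 S` for the Laplacian of the discrete cube, hence `f = |S|` satisfies
`Δ f ≥ -2 f`. In the Walsh expansion, `𝔼 f Δ f ≥ -2 𝔼 f²` reads `∑ |A| f̂(A)² ≤ ∑ f̂(A)²`; as `f` is
even, `f̂(A) = 0` for odd `|A|`, so `∑_{A ≠ ∅} f̂(A)² ≤ f̂(∅)²`, that is `𝔼 f² ≤ 2 (𝔼 f)²`.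
-/

open Finset
open scoped BigOperators

def boolSign (b : Bool) : ℝ := if b then 1 else -1

@[simp] lemma boolSign_true : boolSign true = 1 := rfl
@[simp] lemma boolSign_false : boolSign false = -1 := rfl

@[simp] lemma boolSign_not (b : Bool) : boolSign (!b) = -boolSign b := by cases b <;> simp

@[simp] lemma boolSign_mul_self (b : Bool) : boolSign b * boolSign b = 1 := by cases b <;> simp

@[simp] lemma abs_boolSign (b : Bool) : |boolSign b| = 1 := by cases b <;> simp

namespace BooleanCube

variable {ι : Type*}

def walsh (A : Finset ι) (x : ι → Bool) : ℝ := ∏ i ∈ A, boolSign (x i)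

@[simp] lemma walsh_empty (x : ι → Bool) : walsh ∅ x = 1 := prod_empty

lemma walsh_singleton (i : ι) (x : ι → Bool) : walsh {i} x = boolSign (x i) := prod_singleton _ _

lemma walsh_mul_self (A : Finset ι) (x : ι → Bool) : walsh A x * walsh A x = 1 := by
  rw [walsh, ← prod_mul_distrib]
  exact prod_eq_one fun i _ ↦ boolSign_mul_self _

lemma walsh_not (A : Finset ι) (x : ι → Bool) :
    walsh A (fun i ↦ !x i) = (-1) ^ #A * walsh A x := by
  simp [walsh, prod_neg]

variable [DecidableEq ι]

def flipAt (i : ι) (x : ι → Bool) : ι → Bool := Function.update x i (!x i)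

lemma flipAt_involutive (i : ι) : Function.Involutive (flipAt i) := by
  intro x
  simp [flipAt]

lemma boolSign_flipAt (i j : ι) (x : ι → Bool) :
    boolSign (flipAt i x j) = if j = i then -boolSign (x j) else boolSign (x j) := by
  rw [flipAt, Function.update_apply]
  split_ifs with h <;> simp [h]

lemma walsh_flipAt (A : Finset ι) (i : ι) (x : ι → Bool) :
    walsh A (flipAt i x) = (if i ∈ A then -1 else 1) * walsh A x := by
  split_ifs with hi
  · rw [walsh, walsh, ← mul_prod_erase A _ hi, ← mul_prod_erase A _ hi, boolSign_flipAt,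
      if_pos rfl, prod_congr rfl fun j hj ↦ by rw [boolSign_flipAt, if_neg (ne_of_mem_erase hj)]]
    ring
  · rw [one_mul]
    exact prod_congr rfl fun j hj ↦ by rw [boolSign_flipAt, if_neg (by rintro rfl; exact hi hj)]

variable [Fintype ι]

lemma expect_comp_flipAt (i : ι) (g : (ι → Bool) → ℝ) : 𝔼 x, g (flipAt i x) = 𝔼 x, g x :=
  Fintype.expect_bijective _ (flipAt_involutive i).bijective _ _ fun _ ↦ rfl

lemma expect_eq_zero_of_comp_flipAt (i : ι) {g : (ι → Bool) → ℝ}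
    (hg : ∀ x, g (flipAt i x) = -g x) : 𝔼 x, g x = 0 := by
  have h := expect_comp_flipAt i g
  simp only [hg, expect_neg_distrib] at h
  linarith

lemma expect_walsh_mul_walsh (A B : Finset ι) :
    𝔼 x, walsh A x * walsh B x = if A = B then 1 else 0 := by
  split_ifs with hAB
  · simp [hAB, walsh_mul_self]
  obtain ⟨i, hi⟩ : (symmDiff A B).Nonempty := by
    rwa [nonempty_iff_ne_empty, Ne, ← bot_eq_empty, symmDiff_eq_bot]
  refine expect_eq_zero_of_comp_flipAt i fun x ↦ ?_
  rw [walsh_flipAt, walsh_flipAt]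
  rcases mem_symmDiff.1 hi with ⟨hA, hB⟩ | ⟨hB, hA⟩ <;> simp [hA, hB]

lemma sum_walsh_mul_walsh (x y : ι → Bool) :
    ∑ A, walsh A y * walsh A x = if y = x then 2 ^ Fintype.card ι else 0 := by
  have h := Fintype.prod_add (fun i ↦ boolSign (y i) * boolSign (x i)) 1
  simp only [Pi.one_apply, prod_const_one, mul_one, prod_mul_distrib] at h
  simp only [walsh, ← h]
  split_ifs with hyx
  · simp [hyx, one_add_one_eq_two]
  · obtain ⟨i, hi⟩ := Function.ne_iff.1 hyx
    refine prod_eq_zero (mem_univ i) ?_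
    cases hy : y i <;> cases hx : x i <;> simp_all

noncomputable def fourierCoeff (f : (ι → Bool) → ℝ) (A : Finset ι) : ℝ := 𝔼 x, f x * walsh A x

lemma fourierCoeff_empty (f : (ι → Bool) → ℝ) : fourierCoeff f ∅ = 𝔼 x, f x := by
  simp [fourierCoeff]

lemma sum_fourierCoeff_mul_walsh (f : (ι → Bool) → ℝ) (x : ι → Bool) :
    ∑ A, fourierCoeff f A * walsh A x = f x := by
  simp_rw [fourierCoeff, expect_mul, ← expect_sum_comm, mul_assoc, ← mul_sum,
    sum_walsh_mul_walsh, mul_ite, mul_zero]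
  rw [Fintype.expect_ite_eq', NNRat.smul_def, Fintype.card_fun, Fintype.card_bool]
  push_cast
  field_simp

lemma expect_mul_eq_sum_fourierCoeff_mul (f g : (ι → Bool) → ℝ) :
    𝔼 x, f x * g x = ∑ A, fourierCoeff f A * fourierCoeff g A := by
  conv_lhs => enter [2, x]; rw [← sum_fourierCoeff_mul_walsh f x]
  simp_rw [sum_mul, expect_sum_comm, mul_assoc, ← mul_expect, fourierCoeff, mul_comm (g _)]

lemma fourierCoeff_comp_flipAt (f : (ι → Bool) → ℝ) (i : ι) (A : Finset ι) :
    fourierCoeff (fun x ↦ f (flipAt i x)) A = (if i ∈ A then -1 else 1) * fourierCoeff f A := by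
  rw [fourierCoeff, fourierCoeff, mul_expect]
  refine Fintype.expect_bijective _ (flipAt_involutive i).bijective _ _ fun x ↦ ?_
  rw [walsh_flipAt]
  split_ifs <;> ring

def laplacian (f : (ι → Bool) → ℝ) (x : ι → Bool) : ℝ := ∑ i, (f (flipAt i x) - f x)

lemma fourierCoeff_laplacian (f : (ι → Bool) → ℝ) (A : Finset ι) :
    fourierCoeff (laplacian f) A = -2 * #A * fourierCoeff f A := by
  change 𝔼 x, (∑ i, (f (flipAt i x) - f x)) * walsh A x = _
  simp_rw [sum_mul, expect_sum_comm, sub_mul, expect_sub_distrib]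
  change ∑ i, (fourierCoeff (fun x ↦ f (flipAt i x)) A - fourierCoeff f A) = _
  have h (i : ι) : (if i ∈ A then -1 else 1) * fourierCoeff f A - fourierCoeff f A
      = if i ∈ A then -2 * fourierCoeff f A else 0 := by
    split_ifs <;> ring
  simp_rw [fourierCoeff_comp_flipAt, h, sum_ite_mem, univ_inter, sum_const, nsmul_eq_mul]
  ring

lemma fourierCoeff_eq_zero_of_odd {f : (ι → Bool) → ℝ} (hf : ∀ x, f (fun i ↦ !x i) = f x)
    {A : Finset ι} (hA : Odd #A) : fourierCoeff f A = 0 := by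
  have hnot : Function.Involutive fun (x : ι → Bool) (i : ι) ↦ !x i := by intro x; simp
  have h : 𝔼 x : ι → Bool, f (fun i ↦ !x i) * walsh A (fun i ↦ !x i) = 𝔼 x, f x * walsh A x :=
    Fintype.expect_bijective _ hnot.bijective _ _ fun _ ↦ rfl
  simp only [hf, walsh_not, hA.neg_one_pow, neg_one_mul, mul_neg, expect_neg_distrib] at h
  rw [fourierCoeff]
  linarith

lemma expect_sq_le_two_mul_sq_expect {f : (ι → Bool) → ℝ} (hf : ∀ x, f (fun i ↦ !x i) = f x)
    (hΔ : -2 * 𝔼 x, f x ^ 2 ≤ 𝔼 x, f x * laplacian f x) :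
    𝔼 x, f x ^ 2 ≤ 2 * (𝔼 x, f x) ^ 2 := by
  simp_rw [sq, expect_mul_eq_sum_fourierCoeff_mul, fourierCoeff_laplacian] at hΔ ⊢
  rw [← fourierCoeff_empty]
  -- `hΔ` now reads `∑ |A| f̂(A)² ≤ ∑ f̂(A)²`; by evenness `|A| ≥ 2` wherever `A ≠ ∅`, `f̂(A) ≠ 0`.
  have key (A : Finset ι) : 4 * (fourierCoeff f A * fourierCoeff f A)
      + fourierCoeff f A * (-2 * #A * fourierCoeff f A)
      ≤ 4 * if A = ∅ then fourierCoeff f A * fourierCoeff f A else 0 := by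
    split_ifs with hA
    · simp [hA]
    obtain hodd | heven := (Nat.even_or_odd #A).symm
    · simp [fourierCoeff_eq_zero_of_odd hf hodd]
    have : (2 : ℝ) ≤ #A := by
      have := card_ne_zero.2 (nonempty_iff_ne_empty.2 hA)
      obtain ⟨k, hk⟩ := heven
      exact_mod_cast (by omega : 2 ≤ #A)
    nlinarith [mul_self_nonneg (fourierCoeff f A)]
  have := sum_le_sum fun A (_ : A ∈ univ) ↦ key A
  rw [sum_add_distrib, ← mul_sum, ← mul_sum, sum_ite_eq'] at this
  simp only [mem_univ, if_true] at this
  linarith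

lemma laplacian_sum_boolSign_mul (a : ι → ℝ) (x : ι → Bool) :
    laplacian (fun y ↦ ∑ j, boolSign (y j) * a j) x = -2 * ∑ j, boolSign (x j) * a j := by
  have h (i j : ι) : boolSign (flipAt i x j) * a j - boolSign (x j) * a j
      = if j = i then -2 * (boolSign (x j) * a j) else 0 := by
    rw [boolSign_flipAt]; split_ifs <;> ring
  simp_rw [laplacian, ← sum_sub_distrib, h, sum_ite_eq', mem_univ, if_true, mul_sum]

lemma neg_two_mul_abs_le_laplacian_abs {f : (ι → Bool) → ℝ} (hf : ∀ x, laplacian f x = -2 * f x)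
    (x : ι → Bool) : -2 * |f x| ≤ laplacian (fun y ↦ |f y|) x := by
  have hsum : ∑ i, f (flipAt i x) = (Fintype.card ι - 2) * f x := by
    have := hf x
    rw [laplacian, sum_sub_distrib, sum_const, card_univ, nsmul_eq_mul] at this
    linarith
  have htri := abs_sum_le_sum_abs (fun i ↦ f (flipAt i x)) univ
  rw [hsum, abs_mul] at htri
  rw [laplacian, sum_sub_distrib, sum_const, card_univ, nsmul_eq_mul]
  nlinarith [le_abs_self ((Fintype.card ι : ℝ) - 2), abs_nonneg (f x)]

lemma expect_sq_sum_boolSign_mul (a : ι → ℝ) :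
    𝔼 x : ι → Bool, (∑ i, boolSign (x i) * a i) ^ 2 = ∑ i, a i ^ 2 := by
  have h (x : ι → Bool) (i j : ι) : boolSign (x i) * a i * (boolSign (x j) * a j)
      = a i * a j * (walsh {i} x * walsh {j} x) := by
    rw [walsh_singleton, walsh_singleton]; ring
  simp_rw [sq, sum_mul_sum, h, expect_sum_comm, ← mul_expect, expect_walsh_mul_walsh,
    singleton_inj, mul_ite, mul_one, mul_zero, sum_ite_eq, mem_univ, if_true]

end BooleanCube

open BooleanCube in
theorem sum_sq_le_two_mul_sq_expect_abs {ι : Type*} [Fintype ι] [DecidableEq ι] (a : ι → ℝ) :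
    ∑ i, a i ^ 2 ≤ 2 * (𝔼 x : ι → Bool, |∑ i, boolSign (x i) * a i|) ^ 2 := by
  set S : (ι → Bool) → ℝ := fun x ↦ ∑ i, boolSign (x i) * a i
  have heven (x : ι → Bool) : |S (fun i ↦ !x i)| = |S x| := by
    simp only [S, boolSign_not, neg_mul, sum_neg_distrib, abs_neg]
  have hΔ : -2 * 𝔼 x, |S x| ^ 2 ≤ 𝔼 x, |S x| * laplacian (fun y ↦ |S y|) x := by
    rw [mul_expect]
    refine expect_le_expect fun x _ ↦ ?_
    have := neg_two_mul_abs_le_laplacian_abs (laplacian_sum_boolSign_mul a) x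
    nlinarith [abs_nonneg (S x)]
  have := expect_sq_le_two_mul_sq_expect heven hΔ
  simpa only [sq_abs, S, expect_sq_sum_boolSign_mul] using this

lemma sqrt_sum_sq_expect_abs_le_expect_sqrt {α J : Type*} [Fintype α] [Fintype J] (g : α → J → ℝ) :
    √(∑ j, (𝔼 x, |g x j|) ^ 2) ≤ 𝔼 x, √(∑ j, g x j ^ 2) := by
  let V (x : α) : EuclideanSpace ℝ J := WithLp.toLp 2 fun j ↦ |g x j|
  have hV (x : α) : ‖V x‖ = √(∑ j, g x j ^ 2) := by simp [V, EuclideanSpace.norm_eq]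
  have hmean : (𝔼 x, V x).ofLp = fun j ↦ 𝔼 x, |g x j| := by
    ext j; simp [V, Finset.expect]
  have : ‖𝔼 x, V x‖ ≤ 𝔼 x, ‖V x‖ :=
    le_expect_of_subadditive norm_zero norm_add_le fun n v ↦ by
      rw [← NNRat.cast_smul_eq_nnqsmul ℝ, ← NNRat.cast_smul_eq_nnqsmul ℝ, norm_smul,
        smul_eq_mul, Real.norm_of_nonneg (by positivity)]
  rw [EuclideanSpace.norm_eq, hmean, expect_congr rfl fun x _ ↦ hV x] at this
  simpa only [Real.norm_eq_abs, sq_abs] using this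

lemma sum_fin_succ_pi {α M : Type*} [Fintype α] [AddCommMonoid M] {m : ℕ}
    (F : (Fin (m + 1) → α) → M) : ∑ j, F j = ∑ j₀, ∑ j : Fin m → α, F (Fin.cons j₀ j) := by
  rw [← Fintype.sum_prod_type']
  exact (Fintype.sum_equiv (Fin.consEquiv fun _ ↦ α) _ _ fun _ ↦ rfl).symm

lemma expect_fin_succ_pi {α M : Type*} [Fintype α] [AddCommMonoid M] [Module ℚ≥0 M] {m : ℕ}
    (F : (Fin (m + 1) → α) → M) : 𝔼 X, F X = 𝔼 x₀, 𝔼 X : Fin m → α, F (Fin.cons x₀ X) := by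
  rw [← expect_product', univ_product_univ]
  exact (Fintype.expect_equiv (Fin.consEquiv fun _ ↦ α) _ _ fun _ ↦ rfl).symm

section Multilinear

variable {E : Type*} [AddCommGroup E] [Module ℝ E] {ι : Type*} [Fintype ι] [DecidableEq ι]

def signedSum (e : ι → E) (ε : ι → Bool) : E := ∑ j, boolSign (ε j) • e j

lemma sum_sq_apply_le_two_mul_sq_expect_abs (φ : E →ₗ[ℝ] ℝ) (e : ι → E) :
    ∑ j, φ (e j) ^ 2 ≤ 2 * (𝔼 ε, |φ (signedSum e ε)|) ^ 2 := by
  simpa [signedSum] using sum_sq_le_two_mul_sq_expect_abs fun j ↦ φ (e j)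

theorem sqrt_sum_sq_le_expect_abs_signedSum (e : ι → E) {m : ℕ}
    (W : MultilinearMap ℝ (fun _ : Fin m => E) ℝ) :
    √(∑ j : Fin m → ι, W (e ∘ j) ^ 2)
      ≤ √2 ^ m * 𝔼 X : Fin m → ι → Bool, |W (signedSum e ∘ X)| := by
  induction m with
  | zero =>
    have h (X : Fin 0 → ι → Bool) : W (signedSum e ∘ X) = W (e ∘ default) :=
      congrArg W (Subsingleton.elim _ _)
    simp only [h, Fintype.sum_unique, Fintype.expect_const, pow_zero, one_mul,
      Real.sqrt_sq_eq_abs, le_refl]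
  | succ m ih =>
    set b : (ι → Bool) → (Fin m → ι) → ℝ := fun ε j ↦ W (Fin.cons (signedSum e ε) (e ∘ j))
    have hrow (j : Fin m → ι) :
        ∑ j₀, W (Fin.cons (e j₀) (e ∘ j)) ^ 2 ≤ 2 * (𝔼 ε, |b ε j|) ^ 2 := by
      simpa only [MultilinearMap.toLinearMap_apply, Fin.update_cons_zero] using
        sum_sq_apply_le_two_mul_sq_expect_abs (W.toLinearMap (Fin.cons 0 (e ∘ j)) 0) e
    have hcol (ε : ι → Bool) : √(∑ j, b ε j ^ 2) ≤ √2 ^ m *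
        𝔼 X : Fin m → ι → Bool, |W (Fin.cons (signedSum e ε) (signedSum e ∘ X))| := by
      simpa only [MultilinearMap.curryLeft_apply] using ih (W.curryLeft (signedSum e ε))
    calc √(∑ j, W (e ∘ j) ^ 2) = √(∑ j, ∑ j₀, W (Fin.cons (e j₀) (e ∘ j)) ^ 2) := by
          rw [sum_fin_succ_pi, sum_comm]; simp_rw [Fin.comp_cons]
      _ ≤ √(∑ j, 2 * (𝔼 ε, |b ε j|) ^ 2) := Real.sqrt_le_sqrt (sum_le_sum fun j _ ↦ hrow j)
      _ = √2 * √(∑ j, (𝔼 ε, |b ε j|) ^ 2) := by rw [← mul_sum, Real.sqrt_mul zero_le_two]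
      _ ≤ √2 * 𝔼 ε, √(∑ j, b ε j ^ 2) := by gcongr; exact sqrt_sum_sq_expect_abs_le_expect_sqrt b
      _ ≤ √2 * 𝔼 ε, (√2 ^ m *
            𝔼 X : Fin m → ι → Bool, |W (Fin.cons (signedSum e ε) (signedSum e ∘ X))|) := by
          gcongr with ε; exact hcol ε
      _ = √2 ^ (m + 1) * 𝔼 X, |W (signedSum e ∘ X)| := by
          rw [expect_fin_succ_pi, ← mul_expect, pow_succ]; simp_rw [Fin.comp_cons]; ring

end Multilinear

lemma norm_signedSum_stdBasis_le_one {n : ℕ} (ε : Fin n → Bool) :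
    ‖signedSum (stdBasis n) ε‖ ≤ 1 := by
  rw [← PiLp.norm_ofLp, pi_norm_le_iff_of_nonneg zero_le_one]
  intro j
  simp [signedSum, stdBasis, Pi.single_apply]

lemma sum_abs_apply_stdBasis_le {n : ℕ} (φ : PiLp ⊤ (fun _ : Fin n => ℝ) →ₗ[ℝ] ℝ) {C : ℝ}
    (hC : ∀ v, ‖v‖ ≤ 1 → φ v ≤ C) : ∑ j, |φ (stdBasis n j)| ≤ C := by
  let ε (j : Fin n) : Bool := decide (0 ≤ φ (stdBasis n j))
  have h (j : Fin n) : |φ (stdBasis n j)| = boolSign (ε j) * φ (stdBasis n j) := by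
    by_cases hj : 0 ≤ φ (stdBasis n j)
    · simp [ε, hj, abs_of_nonneg hj]
    · simp [ε, hj, abs_of_neg (not_le.1 hj)]
  calc ∑ j, |φ (stdBasis n j)| = φ (signedSum (stdBasis n) ε) := by
        simp [h, signedSum]
    _ ≤ C := hC _ (norm_signedSum_stdBasis_le_one ε)

lemma sum_abs_apply_cons_stdBasis_le {m n : ℕ}
    (U : ContinuousMultilinearMap ℝ (fun _ : Fin (m + 1) => PiLp ⊤ fun _ : Fin n => ℝ) ℝ)
    {x : Fin m → PiLp ⊤ fun _ : Fin n => ℝ} (hx : ∀ s, ‖x s‖ ≤ 1) :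
    ∑ j, |U (Fin.cons (stdBasis n j) x)| ≤ ‖U‖ := by
  simpa only [MultilinearMap.toLinearMap_apply, Fin.update_cons_zero,
    ContinuousMultilinearMap.coe_coe] using
    sum_abs_apply_stdBasis_le (U.toMultilinearMap.toLinearMap (Fin.cons 0 x) 0) fun v hv ↦ by
      refine (le_abs_self _).trans (U.unit_le_opNorm ?_)
      refine (pi_norm_le_iff_of_nonneg zero_le_one).2 (Fin.cases ?_ ?_)
      · simpa using hv
      · simpa using hx

/-- Mixed `(ℓ₁,ℓ₂)`-Littlewood inequality with exponent `(1,2,…,2)`: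
for every `(m+1)`-linear form `U` on `(ℝⁿ)^{m+1}` with sup norms,
`∑_{j₁} (∑_{j₂,…,j_{m+1}} |U(e_{j₁},…,e_{j_{m+1}})|²)^{1/2} ≤ (√2)^m ‖U‖`. -/
theorem stmt9 (m n : ℕ)
    (U : ContinuousMultilinearMap ℝ (fun _ : Fin (m + 1) => PiLp ⊤ fun _ : Fin n => ℝ) ℝ) :
    ∑ j₁ : Fin n,
        (∑ jr : Fin m → Fin n,
          |U (Fin.cons (stdBasis n j₁) (fun s => stdBasis n (jr s)))| ^ 2) ^ ((1 : ℝ) / 2)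
      ≤ Real.sqrt 2 ^ m * ‖U‖ := by
  have hrow (j₁ : Fin n) := sqrt_sum_sq_le_expect_abs_signedSum (stdBasis n)
    (U.toMultilinearMap.curryLeft (stdBasis n j₁))
  simp only [MultilinearMap.curryLeft_apply, ContinuousMultilinearMap.coe_coe] at hrow
  calc _ ≤ ∑ j₁, √2 ^ m * 𝔼 X : Fin m → Fin n → Bool,
          |U (Fin.cons (stdBasis n j₁) (signedSum (stdBasis n) ∘ X))| := by
        gcongr with j₁
        simp_rw [sq_abs, ← Real.sqrt_eq_rpow]
        exact hrow j₁
    _ ≤ √2 ^ m * 𝔼 X : Fin m → Fin n → Bool, ‖U‖ := by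
        rw [← mul_sum, ← expect_sum_comm]
        gcongr with X
        exact sum_abs_apply_cons_stdBasis_le U fun s ↦ norm_signedSum_stdBasis_le_one (X s)
    _ = √2 ^ m * ‖U‖ := by rw [Fintype.expect_const]
end
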